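/- For every pair of natural numbers r, s with 1 ≤ r ≤ s, the integer interval [r, s] can be partitioned into two sequences of disjoint and consecutive intervals I_{-p}, ..., I_0 and I_1, ..., I_q, each belonging to the geometric covering 𝒞, such that |I_{-i}|/|I_{-i+1}| ≤ 1/2 for all i ≥ 1 and |I_i|/|I_{i-1}| ≤ 1/2 for all i ≥ 2 (here |I| denotes the number of integers in I, consecutive means the right endpoint of each interval is one less than the left endpoint of the next, and together the intervals cover exactly [r, s]). -/

import Mathlib

/-!
Lay blocks down greedily from `r`: at `x` take `[x, x + 2 ^ v₂(x))` while it fits into `[r, s]`.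
Each such step raises the 2-adic valuation, so these blocks at least double in length. At the
point `z` where the next one no longer fits, the remaining length `n = s + 1 - z` is below
`2 ^ v₂(z)`, so every power of two up to `n` divides `z`, and the binary expansion of `n`, read
from its top bit, tiles `[z, s]` by aligned blocks that at least halve. The interval `I₀` is the
last block of the first run, or the first block of the second when the first run is empty; no
condition links `I₀` and `I₁`.
-/

/-- Membership in the geometric covering 𝒞: the interval `[a, b]` of integers
belongs to 𝒞 iff it has the form `[i * 2^k, (i+1) * 2^k - 1]` for some `k ≥ 0`, `i ≥ 1`. -/
def InGeomCover (a b : ℕ) : Prop :=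
  ∃ k i : ℕ, 1 ≤ i ∧ a = i * 2 ^ k ∧ b = (i + 1) * 2 ^ k - 1

lemma inGeomCover_of_two_pow_dvd {x k : ℕ} (hx : 0 < x) (h : 2 ^ k ∣ x) :
    InGeomCover x (x + 2 ^ k - 1) := by
  obtain ⟨c, rfl⟩ := h
  refine ⟨k, c, Nat.pos_of_mul_pos_left hx, mul_comm _ _, ?_⟩
  ring_nf

lemma two_mul_two_pow_le_two_pow {m n : ℕ} (h : m < n) : 2 * 2 ^ m ≤ 2 ^ n := by
  rw [← pow_succ']
  exact Nat.pow_le_pow_right two_pos h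

lemma padicValNat_two_lt_add_two_pow {x : ℕ} (hx : x ≠ 0) :
    padicValNat 2 x < padicValNat 2 (x + 2 ^ padicValNat 2 x) := by
  have hndvd : ¬ 2 ^ (padicValNat 2 x + 1) ∣ x := pow_succ_padicValNat_not_dvd hx
  obtain ⟨c, hc⟩ : 2 ^ padicValNat 2 x ∣ x := pow_padicValNat_dvd
  generalize padicValNat 2 x = v at hndvd hc ⊢
  obtain ⟨d, rfl⟩ : Odd c := by
    rw [← Nat.not_even_iff_odd]
    rintro ⟨d, rfl⟩
    exact hndvd ⟨d, by rw [hc]; ring⟩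
  have hdvd : 2 ^ (v + 1) ∣ x + 2 ^ v := ⟨d + 1, by rw [hc]; ring⟩
  exact (padicValNat_dvd_iff_le (by positivity)).mp hdvd

def blockSum (l : List ℕ) : ℕ := (l.map (2 ^ ·)).sum

/-- A list `l` of exponents encodes the tiling of `[x, x + blockSum l)` by consecutive blocks of
lengths `2 ^ k`, `k ∈ l`; it is aligned when every block starts at a multiple of its length. -/
def AlignedFrom : ℕ → List ℕ → Prop
  | _, [] => True
  | x, k :: l => 2 ^ k ∣ x ∧ AlignedFrom (x + 2 ^ k) l

@[simp] lemma blockSum_nil : blockSum [] = 0 := rfl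

@[simp] lemma blockSum_cons (k : ℕ) (l : List ℕ) : blockSum (k :: l) = 2 ^ k + blockSum l := by
  simp [blockSum]

@[simp] lemma blockSum_append (l₁ l₂ : List ℕ) :
    blockSum (l₁ ++ l₂) = blockSum l₁ + blockSum l₂ := by
  simp [blockSum]

lemma two_pow_le_blockSum {l : List ℕ} {k : ℕ} (hk : k ∈ l) : 2 ^ k ≤ blockSum l :=
  List.le_sum_of_mem (List.mem_map_of_mem hk)

lemma blockSum_take_succ {l : List ℕ} {k : ℕ} (hk : k < l.length) :
    blockSum (l.take (k + 1)) = blockSum (l.take k) + 2 ^ l.getD k 0 := by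
  induction l generalizing k with
  | nil => simp at hk
  | cons e l ih =>
    cases k with
    | zero => simp
    | succ k =>
      simp only [List.take_succ_cons, blockSum_cons, List.getD_cons_succ]
      rw [ih (by simpa using hk), add_assoc]

lemma AlignedFrom.append {x : ℕ} {l₁ l₂ : List ℕ} (h₁ : AlignedFrom x l₁)
    (h₂ : AlignedFrom (x + blockSum l₁) l₂) : AlignedFrom x (l₁ ++ l₂) := by
  induction l₁ generalizing x with
  | nil => simpa using h₂
  | cons k l ih =>
    refine ⟨h₁.1, ih h₁.2 ?_⟩
    simpa [add_assoc] using h₂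

lemma AlignedFrom.two_pow_dvd {x : ℕ} {l : List ℕ} (h : AlignedFrom x l) {k : ℕ}
    (hk : k < l.length) : 2 ^ l.getD k 0 ∣ x + blockSum (l.take k) := by
  induction l generalizing x k with
  | nil => simp at hk
  | cons e l ih =>
    cases k with
    | zero => simpa using h.1
    | succ k =>
      simpa [add_assoc] using ih h.2 (k := k) (by simpa using hk)

lemma List.Pairwise.rel_getD {α : Type*} {R : α → α → Prop} {l : List α} (h : l.Pairwise R)
    {i j : ℕ} (hij : i < j) (hj : j < l.length) (d : α) : R (l.getD i d) (l.getD j d) := by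
  rw [List.getD_eq_getElem _ _ (hij.trans hj), List.getD_eq_getElem _ _ hj]
  exact List.pairwise_iff_getElem.mp h i j _ hj hij

lemma exists_descending_alignedFrom (n : ℕ) {x : ℕ} (hx : ∀ k, 2 ^ k ≤ n → 2 ^ k ∣ x) :
    ∃ l, AlignedFrom x l ∧ l.Pairwise (· > ·) ∧ blockSum l = n := by
  induction n using Nat.strong_induction_on generalizing x with
  | _ n ih =>
    rcases Nat.eq_zero_or_pos n with rfl | hn
    · exact ⟨[], trivial, .nil, rfl⟩
    set k := Nat.log 2 n
    have hk_le : 2 ^ k ≤ n := Nat.pow_log_le_self 2 hn.ne'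
    have hk_lt : n < 2 ^ k * 2 := pow_succ 2 k ▸ Nat.lt_pow_succ_log_self one_lt_two n
    have hrest : ∀ j, 2 ^ j ≤ n - 2 ^ k → 2 ^ j ∣ x + 2 ^ k := by
      intro j hj
      have hjk : j < k := (Nat.pow_lt_pow_iff_right one_lt_two).mp (by omega)
      exact dvd_add (hx j (by omega)) (pow_dvd_pow 2 hjk.le)
    obtain ⟨l, hal, hdesc, hsum⟩ := ih (n - 2 ^ k) (by omega) hrest
    refine ⟨k :: l, ⟨hx k hk_le, hal⟩, List.pairwise_cons.mpr ⟨fun e he => ?_, hdesc⟩, ?_⟩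
    · have := two_pow_le_blockSum he
      exact (Nat.pow_lt_pow_iff_right one_lt_two).mp (by omega)
    · simp only [blockSum_cons]
      omega

lemma exists_ascending_alignedFrom {x y : ℕ} (hx : 0 < x) (hxy : x ≤ y) :
    ∃ l, AlignedFrom x l ∧ l.Pairwise (· < ·) ∧ (∀ e ∈ l, padicValNat 2 x ≤ e) ∧
      x + blockSum l ≤ y ∧ ∀ k, 2 ^ k ≤ y - (x + blockSum l) → 2 ^ k ∣ x + blockSum l := by
  induction h : y - x using Nat.strong_induction_on generalizing x with
  | _ n ih =>
    set v := padicValNat 2 x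
    by_cases hy : x + 2 ^ v ≤ y
    · have hv := padicValNat_two_lt_add_two_pow hx.ne'
      have hy_lt : y - (x + 2 ^ v) < n := by have := Nat.one_le_two_pow (n := v); omega
      obtain ⟨l, hal, hasc, hmin, hle, hdvd⟩ := ih _ hy_lt (by positivity) hy rfl
      refine ⟨v :: l, ⟨pow_padicValNat_dvd, hal⟩,
        List.pairwise_cons.mpr ⟨fun e he => hv.trans_le (hmin e he), hasc⟩, ?_, ?_, ?_⟩
      · simp only [List.mem_cons, forall_eq_or_imp, le_refl, true_and]
        exact fun e he => (hv.trans_le (hmin e he)).le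
      · simpa [add_assoc] using hle
      · simpa [add_assoc] using hdvd
    · refine ⟨[], trivial, .nil, by simp, by simpa using hxy, fun k hk => ?_⟩
      have hkv : k < v := (Nat.pow_lt_pow_iff_right one_lt_two).mp (by simp at hk; omega)
      exact (pow_dvd_pow 2 hkv.le).trans pow_padicValNat_dvd

theorem exists_geomPartition_of_alignedFrom {r s p : ℕ} {l : List ℕ} (hr : 0 < r)
    (hp : p < l.length) (hal : AlignedFrom r l) (hsum : r + blockSum l = s + 1)
    (hasc : ∀ i < p, l.getD i 0 < l.getD (i + 1) 0)
    (hdesc : ∀ i, p < i → i + 1 < l.length → l.getD (i + 1) 0 < l.getD i 0) :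
    ∃ (p q : ℕ) (a b : ℤ → ℕ),
      (∀ j : ℤ, -(p : ℤ) ≤ j → j ≤ (q : ℤ) → InGeomCover (a j) (b j)) ∧
      (∀ j : ℤ, -(p : ℤ) ≤ j → j ≤ (q : ℤ) → a j ≤ b j) ∧
      a (-(p : ℤ)) = r ∧ b (q : ℤ) = s ∧
      (∀ j : ℤ, -(p : ℤ) ≤ j → j < (q : ℤ) → a (j + 1) = b j + 1) ∧
      (∀ i : ℕ, 1 ≤ i → (i : ℤ) ≤ (p : ℤ) →
        2 * (b (-(i : ℤ)) - a (-(i : ℤ)) + 1) ≤ b (-(i : ℤ) + 1) - a (-(i : ℤ) + 1) + 1) ∧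
      (∀ i : ℕ, 2 ≤ i → (i : ℤ) ≤ (q : ℤ) →
        2 * (b (i : ℤ) - a (i : ℤ) + 1) ≤ b ((i : ℤ) - 1) - a ((i : ℤ) - 1) + 1) := by
  set start : ℕ → ℕ := fun k => r + blockSum (l.take k)
  set size : ℕ → ℕ := fun k => 2 ^ l.getD k 0
  have hstart_succ : ∀ k < l.length, start (k + 1) = start k + size k := fun k hk => by
    simp only [start, size, blockSum_take_succ hk, add_assoc]
  have hsize_pos : ∀ k, 0 < size k := fun k => by positivity
  have hcard : ∀ k < l.length, start (k + 1) - 1 - start k + 1 = size k := fun k hk => by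
    have := hstart_succ k hk
    have := hsize_pos k
    omega
  have hsize_lt : ∀ k k', l.getD k 0 < l.getD k' 0 → 2 * size k ≤ size k' :=
    fun k k' h => two_mul_two_pow_le_two_pow h
  refine ⟨p, l.length - 1 - p, fun j => start (j + p).toNat,
    fun j => start ((j + p).toNat + 1) - 1, ?_, ?_, ?_, ?_, ?_, ?_, ?_⟩
  · intro j hj₁ hj₂
    have hk : (j + p).toNat < l.length := by omega
    have hcover := inGeomCover_of_two_pow_dvd (by omega) (hal.two_pow_dvd hk)
    simpa only [hstart_succ _ hk] using hcover
  · intro j hj₁ hj₂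
    have := hstart_succ _ (show (j + p).toNat < l.length by omega)
    have := hsize_pos (j + p).toNat
    dsimp only
    omega
  · simp [start]
  · have hk : ((l.length - 1 - p : ℕ) + p : ℤ).toNat + 1 = l.length := by omega
    simp only [hk, start, List.take_length]
    omega
  · intro j hj₁ hj₂
    have hk : (j + 1 + p).toNat = (j + p).toNat + 1 := by omega
    have : 0 < start ((j + p).toNat + 1) := by simp only [start]; omega
    simp only [hk]
    omega
  · intro i hi₁ hi₂
    have hk : (-(i : ℤ) + p).toNat = p - i := by omega
    have hk' : (-(i : ℤ) + 1 + p).toNat = p - i + 1 := by omega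
    simp only [hk, hk', hcard _ (show p - i < l.length by omega),
      hcard _ (show p - i + 1 < l.length by omega)]
    exact hsize_lt _ _ (hasc (p - i) (by omega))
  · intro i hi₁ hi₂
    have hk : ((i : ℤ) + p).toNat = i - 1 + p + 1 := by omega
    have hk' : ((i : ℤ) - 1 + p).toNat = i - 1 + p := by omega
    simp only [hk, hk', hcard _ (show i - 1 + p < l.length by omega),
      hcard _ (show i - 1 + p + 1 < l.length by omega)]
    exact hsize_lt _ _ (hdesc (i - 1 + p) (by omega) (by omega))

/-- **Geometric covering partition lemma.**
For any `1 ≤ r ≤ s`, the interval `[r, s]` can be partitioned into two sequences of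
disjoint consecutive intervals `I_{-p}, ..., I_0` and `I_1, ..., I_q`, all belonging to
the geometric covering 𝒞, such that `|I_{-i}|/|I_{-i+1}| ≤ 1/2` for all `i ≥ 1` and
`|I_i|/|I_{i-1}| ≤ 1/2` for all `i ≥ 2`. The intervals are indexed by `j ∈ [-p, q]`,
with left endpoints `a j` and right endpoints `b j`. -/
theorem geometric_covering_partition (r s : ℕ) (hr : 1 ≤ r) (hrs : r ≤ s) :
    ∃ (p q : ℕ) (a b : ℤ → ℕ),
      -- every interval in the sequence belongs to the geometric covering 𝒞
      (∀ j : ℤ, -(p : ℤ) ≤ j → j ≤ (q : ℤ) → InGeomCover (a j) (b j)) ∧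
      -- each interval is nonempty
      (∀ j : ℤ, -(p : ℤ) ≤ j → j ≤ (q : ℤ) → a j ≤ b j) ∧
      -- together they cover exactly [r, s]: first left endpoint is r, last right endpoint is s,
      a (-(p : ℤ)) = r ∧ b (q : ℤ) = s ∧
      -- and they are consecutive (hence disjoint): each interval starts right after the previous
      (∀ j : ℤ, -(p : ℤ) ≤ j → j < (q : ℤ) → a (j + 1) = b j + 1) ∧
      -- |I_{-i}| / |I_{-i+1}| ≤ 1/2 for all i ≥ 1
      (∀ i : ℕ, 1 ≤ i → (i : ℤ) ≤ (p : ℤ) →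
        2 * (b (-(i : ℤ)) - a (-(i : ℤ)) + 1) ≤ b (-(i : ℤ) + 1) - a (-(i : ℤ) + 1) + 1) ∧
      -- |I_i| / |I_{i-1}| ≤ 1/2 for all i ≥ 2
      (∀ i : ℕ, 2 ≤ i → (i : ℤ) ≤ (q : ℤ) →
        2 * (b (i : ℤ) - a (i : ℤ) + 1) ≤ b ((i : ℤ) - 1) - a ((i : ℤ) - 1) + 1) := by
  obtain ⟨L, halL, hascL, -, hmid_le, hmid_dvd⟩ :=
    exists_ascending_alignedFrom (x := r) (y := s + 1) (by omega) (by omega)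
  obtain ⟨D, halD, hdescD, hsumD⟩ := exists_descending_alignedFrom _ hmid_dvd
  have hsum : r + blockSum (L ++ D) = s + 1 := by
    rw [blockSum_append]
    omega
  have hlen : 0 < (L ++ D).length := by
    refine List.length_pos_of_ne_nil fun hnil => ?_
    rw [hnil, blockSum_nil] at hsum
    omega
  have hlen_append : (L ++ D).length = L.length + D.length := List.length_append
  refine exists_geomPartition_of_alignedFrom (p := L.length - 1) hr (by omega)
    (halL.append halD) hsum (fun i hi => ?_) (fun i hi hi' => ?_)
  · rw [List.getD_append _ _ _ _ (by omega), List.getD_append _ _ _ _ (by omega)]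
    exact hascL.rel_getD (Nat.lt_succ_self i) (by omega) 0
  · rw [List.getD_append_right _ _ _ _ (by omega), List.getD_append_right _ _ _ _ (by omega)]
    exact hdescD.rel_getD (by omega) (by omega) 0
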